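/- Let G be a finite simple graph and define the iterated line graphs by L⁰(G) = G and L^{k+1}(G) = L(L^k(G)). Let A be the adjacency matrix of G over ℝ, and for each k let H^{(k,k+1)} be the incidence matrix of L^k(G) (a matrix indexed by V(L^k(G)) × E(L^k(G)), where E(L^k(G)) = V(L^{k+1}(G))). For m ≥ 1, set H^{(m)} = H^{(0,1)} · H^{(1,2)} · ... · H^{(m-1,m)}. If for every k with 0 ≤ k ≤ m−1 the graph L^k(G) has no isolated vertices, then for all vertices u, v of G: ((A + I)^m)_{uv} > 0 if and only if (H^{(m)} (H^{(m)})ᵀ)_{uv} > 0. (This is the paper's Lemma 1.) -/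

import Mathlib

open Matrix
open scoped Classical

universe u

/-- The incidence matrix of a simple graph `G`, indexed by vertices and edges:
the entry at `(v, e)` is `1` if `v` is an endpoint of `e`, and `0` otherwise. -/
noncomputable def edgeIncMatrix {V : Type u} (G : SimpleGraph V) : Matrix V G.edgeSet ℝ :=
  fun v e => if v ∈ (e : Sym2 V) then 1 else 0

/-- The iterated line graphs of `G` (bundled with their vertex types):
`L⁰(G) = G` and `L^{k+1}(G) = L(L^k(G))`.  The vertex type of `L^{k+1}(G)` is the
edge set of `L^k(G)`. -/
def iterLineGraph {V : Type u} (G : SimpleGraph V) : ℕ → Σ α : Type u, SimpleGraph α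
  | 0 => ⟨V, G⟩
  | k + 1 => ⟨(iterLineGraph G k).2.edgeSet, (iterLineGraph G k).2.lineGraph⟩

noncomputable instance iterLineGraphFintype {V : Type u} [Fintype V] (G : SimpleGraph V) :
    ∀ m : ℕ, Fintype (iterLineGraph G m).1
  | 0 => ‹Fintype V›
  | m + 1 => by
      haveI := iterLineGraphFintype G m
      exact (show Fintype ((iterLineGraph G m).2.edgeSet) from Fintype.ofFinite _)

/-- The product `H^(m) = H^(0,1) ⬝ H^(1,2) ⬝ ... ⬝ H^(m-1,m)` of the incidence matrices of
the iterated line graphs, where `H^(k,k+1)` is the incidence matrix of `L^k(G)`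
(by convention, the empty product `H^(0)` is the identity). -/
noncomputable def iterIncProd {V : Type u} [Fintype V] (G : SimpleGraph V) :
    ∀ m : ℕ, Matrix V (iterLineGraph G m).1 ℝ
  | 0 => (1 : Matrix V V ℝ)
  | m + 1 => iterIncProd G m * edgeIncMatrix (iterLineGraph G m).2

/-!
For entrywise nonnegative matrices the positivity pattern of a product is the relational
composition of the patterns of the factors. If `H` is the incidence matrix of a graph `Γ`, then
`H Hᵀ` has the pattern of `A_Γ + I` when `Γ` has no isolated vertex, and `Hᵀ H` has the pattern
of `A_{L(Γ)} + I`; with `H (Hᵀ H)ʲ = (H Hᵀ)ʲ H`, the matrices `H (A_{L(Γ)} + I)ʲ Hᵀ` and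
`(A_Γ + I)ʲ⁺¹` have the same pattern. Since `H^(k+1) = H^(k) H`, induction on `k` shows that
`H^(k) (A_{L^k(G)} + I)ʲ H^(k)ᵀ` has the pattern of `(A + I)^(k+j)`; the theorem is `j = 0`.
-/

namespace Matrix

variable {l m n o R : Type*}

theorem mul_pow_mul_eq_pow_mul_mul [Fintype m] [Fintype n] [DecidableEq m] [DecidableEq n]
    [Semiring R] (M : Matrix m n R) (N : Matrix n m R) (k : ℕ) :
    M * (N * M) ^ k = (M * N) ^ k * M := by
  induction k with
  | zero => rw [pow_zero, pow_zero, Matrix.mul_one, Matrix.one_mul]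
  | succ k ih =>
    rw [pow_succ, pow_succ, ← Matrix.mul_assoc, ih, Matrix.mul_assoc, Matrix.mul_assoc,
      Matrix.mul_assoc]

section Support

variable [Semiring R] [PartialOrder R] [IsOrderedRing R]

def posSupport (M : Matrix m n R) : m → n → Prop := fun i j => 0 < M i j

theorem mul_apply_nonneg [Fintype n] {M : Matrix m n R} {N : Matrix n o R}
    (hM : ∀ i j, 0 ≤ M i j) (hN : ∀ i j, 0 ≤ N i j) (i : m) (k : o) : 0 ≤ (M * N) i k :=
  Finset.sum_nonneg fun j _ => mul_nonneg (hM i j) (hN j k)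

theorem posSupport_mul [Fintype n] [NoZeroDivisors R] {M : Matrix m n R} {N : Matrix n o R}
    (hM : ∀ i j, 0 ≤ M i j) (hN : ∀ i j, 0 ≤ N i j) :
    posSupport (M * N) = Relation.Comp (posSupport M) (posSupport N) := by
  ext i k
  simp only [posSupport, Relation.Comp, mul_apply,
    Finset.sum_pos_iff_of_nonneg fun j _ => mul_nonneg (hM i j) (hN j k), Finset.mem_univ,
    true_and, (mul_nonneg (hM i _) (hN _ k)).lt_iff_ne', (hM i _).lt_iff_ne',
    (hN _ k).lt_iff_ne', ne_eq, mul_eq_zero, not_or]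

theorem posSupport_pow_congr [Fintype n] [DecidableEq n] [NoZeroDivisors R] {M N : Matrix n n R}
    (hM : ∀ i j, 0 ≤ M i j) (hN : ∀ i j, 0 ≤ N i j) (h : posSupport M = posSupport N) (k : ℕ) :
    posSupport (M ^ k) = posSupport (N ^ k) := by
  induction k with
  | zero => rfl
  | succ k ih =>
    rw [pow_succ, pow_succ, posSupport_mul (pow_apply_nonneg hM k) hM,
      posSupport_mul (pow_apply_nonneg hN k) hN, ih, h]

theorem posSupport_mul_mul_congr [Fintype m] [Fintype n] [NoZeroDivisors R]
    {M : Matrix l m R} {X Y : Matrix m n R} {N : Matrix n o R}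
    (hM : ∀ i j, 0 ≤ M i j) (hX : ∀ i j, 0 ≤ X i j) (hY : ∀ i j, 0 ≤ Y i j)
    (hN : ∀ i j, 0 ≤ N i j) (h : posSupport X = posSupport Y) :
    posSupport (M * X * N) = posSupport (M * Y * N) := by
  rw [posSupport_mul (mul_apply_nonneg hM hX) hN, posSupport_mul (mul_apply_nonneg hM hY) hN,
    posSupport_mul hM hX, posSupport_mul hM hY, h]

end Support

end Matrix

section Graph

variable {W : Type u} (Γ : SimpleGraph W)

theorem edgeIncMatrix_nonneg (v : W) (e : Γ.edgeSet) : 0 ≤ edgeIncMatrix Γ v e := by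
  unfold edgeIncMatrix; split_ifs <;> norm_num

theorem posSupport_edgeIncMatrix :
    posSupport (edgeIncMatrix Γ) = fun (v : W) (e : Γ.edgeSet) => v ∈ (e : Sym2 W) := by
  ext v e
  by_cases h : v ∈ (e : Sym2 W) <;> simp [posSupport, edgeIncMatrix, h]

theorem posSupport_edgeIncMatrix_transpose :
    posSupport (edgeIncMatrix Γ)ᵀ = fun (e : Γ.edgeSet) (v : W) => v ∈ (e : Sym2 W) := by
  ext e v
  exact Iff.of_eq (congr_fun₂ (posSupport_edgeIncMatrix Γ) v e)

theorem adjMatrix_add_one_nonneg [DecidableEq W] [DecidableRel Γ.Adj] (v w : W) :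
    0 ≤ (Γ.adjMatrix ℝ + 1) v w := by
  rw [Matrix.add_apply, SimpleGraph.adjMatrix_apply, one_apply]; split_ifs <;> norm_num

theorem posSupport_adjMatrix_add_one [DecidableEq W] [DecidableRel Γ.Adj] :
    posSupport (Γ.adjMatrix ℝ + 1) = fun v w => Γ.Adj v w ∨ v = w := by
  ext v w
  by_cases ha : Γ.Adj v w <;> by_cases he : v = w <;> simp [posSupport, one_apply, ha, he]

theorem posSupport_edgeIncMatrix_mul_transpose [DecidableEq W] [DecidableRel Γ.Adj]
    [Fintype Γ.edgeSet] (h : ∀ v, ∃ w, Γ.Adj v w) :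
    posSupport (edgeIncMatrix Γ * (edgeIncMatrix Γ)ᵀ) = posSupport (Γ.adjMatrix ℝ + 1) := by
  rw [posSupport_mul (N := (edgeIncMatrix Γ)ᵀ) (edgeIncMatrix_nonneg Γ)
      fun e v => edgeIncMatrix_nonneg Γ v e,
    posSupport_edgeIncMatrix, posSupport_edgeIncMatrix_transpose, posSupport_adjMatrix_add_one]
  ext v w
  constructor
  · rintro ⟨e, hv, hw⟩
    by_cases hvw : v = w
    · exact Or.inr hvw
    · exact Or.inl (SimpleGraph.adj_iff_exists_edge.mpr ⟨hvw, e.1, e.2, hv, hw⟩)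
  · rintro (hadj | rfl)
    · exact ⟨⟨s(v, w), hadj⟩, Sym2.mem_mk_left v w, Sym2.mem_mk_right v w⟩
    · obtain ⟨w, hw⟩ := h v
      exact ⟨⟨s(v, w), hw⟩, Sym2.mem_mk_left v w, Sym2.mem_mk_left v w⟩

theorem posSupport_transpose_mul_edgeIncMatrix [Fintype W] [DecidableEq Γ.edgeSet]
    [DecidableRel Γ.lineGraph.Adj] :
    posSupport ((edgeIncMatrix Γ)ᵀ * edgeIncMatrix Γ) =
      posSupport (Γ.lineGraph.adjMatrix ℝ + 1) := by
  rw [posSupport_mul (M := (edgeIncMatrix Γ)ᵀ) (fun e v => edgeIncMatrix_nonneg Γ v e)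
      (edgeIncMatrix_nonneg Γ), posSupport_edgeIncMatrix, posSupport_edgeIncMatrix_transpose,
    posSupport_adjMatrix_add_one]
  ext e f
  constructor
  · rintro ⟨v, he, hf⟩
    by_cases hef : e = f
    · exact Or.inr hef
    · exact Or.inl (SimpleGraph.lineGraph_adj_iff_exists.mpr ⟨hef, v, he, hf⟩)
  · rintro (hadj | rfl)
    · obtain ⟨-, v, he, hf⟩ := SimpleGraph.lineGraph_adj_iff_exists.mp hadj
      exact ⟨v, he, hf⟩
    · exact ⟨(e : Sym2 W).out.1, Sym2.out_fst_mem _, Sym2.out_fst_mem _⟩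

theorem posSupport_edgeIncMatrix_mul_pow_mul_transpose [Fintype W] [DecidableEq W]
    [DecidableRel Γ.Adj] [Fintype Γ.edgeSet] [DecidableEq Γ.edgeSet]
    [DecidableRel Γ.lineGraph.Adj] (h : ∀ v, ∃ w, Γ.Adj v w) (j : ℕ) :
    posSupport (edgeIncMatrix Γ * (Γ.lineGraph.adjMatrix ℝ + 1) ^ j * (edgeIncMatrix Γ)ᵀ) =
      posSupport ((Γ.adjMatrix ℝ + 1) ^ (j + 1)) := by
  set H := edgeIncMatrix Γ
  have hH : ∀ v e, 0 ≤ H v e := edgeIncMatrix_nonneg Γ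
  have hHt : ∀ e v, 0 ≤ Hᵀ e v := fun e v => hH v e
  calc posSupport (H * (Γ.lineGraph.adjMatrix ℝ + 1) ^ j * Hᵀ)
      = posSupport (H * (Hᵀ * H) ^ j * Hᵀ) :=
        posSupport_mul_mul_congr hH (pow_apply_nonneg (adjMatrix_add_one_nonneg _) j)
          (pow_apply_nonneg (mul_apply_nonneg hHt hH) j) hHt
          (posSupport_pow_congr (adjMatrix_add_one_nonneg _) (mul_apply_nonneg hHt hH)
            (posSupport_transpose_mul_edgeIncMatrix Γ).symm j)
    _ = posSupport ((H * Hᵀ) ^ (j + 1)) := by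
        rw [mul_pow_mul_eq_pow_mul_mul, pow_succ, Matrix.mul_assoc]
    _ = posSupport ((Γ.adjMatrix ℝ + 1) ^ (j + 1)) :=
        posSupport_pow_congr (mul_apply_nonneg hH hHt) (adjMatrix_add_one_nonneg Γ)
          (posSupport_edgeIncMatrix_mul_transpose Γ h) _

end Graph

section IteratedLineGraph

variable {V : Type u} [Fintype V] (G : SimpleGraph V)

theorem iterIncProd_nonneg :
    ∀ (k : ℕ) (v : V) (x : (iterLineGraph G k).1), 0 ≤ iterIncProd G k v x
  | 0 => show ∀ v w : V, 0 ≤ (1 : Matrix V V ℝ) v w from fun v w => by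
    rw [one_apply]; split_ifs <;> norm_num
  | k + 1 => mul_apply_nonneg (iterIncProd_nonneg k) (edgeIncMatrix_nonneg _)

theorem posSupport_iterIncProd_succ_mul_pow_mul_transpose (k j : ℕ)
    (h : ∀ x : (iterLineGraph G k).1, ∃ y, (iterLineGraph G k).2.Adj x y) :
    posSupport (iterIncProd G (k + 1) * ((iterLineGraph G (k + 1)).2.adjMatrix ℝ + 1) ^ j *
        (iterIncProd G (k + 1))ᵀ) =
      posSupport (iterIncProd G k * ((iterLineGraph G k).2.adjMatrix ℝ + 1) ^ (j + 1) *
        (iterIncProd G k)ᵀ) := by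
  -- `hstep` below is the goal with `iterIncProd G (k + 1)` unfolded to `P * H`; this needs the
  -- instances that `iterLineGraph G (k + 1)` carries on its vertex type
  let _ : Fintype (iterLineGraph G k).2.edgeSet := iterLineGraphFintype G (k + 1)
  let _ : DecidableEq (iterLineGraph G k).2.edgeSet := fun a b => Classical.propDecidable (a = b)
  set P := iterIncProd G k
  set H := edgeIncMatrix (iterLineGraph G k).2
  have hP := iterIncProd_nonneg G k
  have hH : ∀ v e, 0 ≤ H v e := edgeIncMatrix_nonneg _
  have hHt : ∀ e v, 0 ≤ Hᵀ e v := fun e v => hH v e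
  have hstep : posSupport (P * H * ((iterLineGraph G k).2.lineGraph.adjMatrix ℝ + 1) ^ j *
      (P * H)ᵀ) = posSupport (P * ((iterLineGraph G k).2.adjMatrix ℝ + 1) ^ (j + 1) * Pᵀ) := by
    rw [transpose_mul, ← Matrix.mul_assoc, Matrix.mul_assoc P, Matrix.mul_assoc P]
    exact posSupport_mul_mul_congr hP
      (mul_apply_nonneg (mul_apply_nonneg hH (pow_apply_nonneg (adjMatrix_add_one_nonneg _) j))
        hHt)
      (pow_apply_nonneg (adjMatrix_add_one_nonneg _) _) (fun x v => hP v x)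
      (posSupport_edgeIncMatrix_mul_pow_mul_transpose _ h j)
  exact hstep

theorem posSupport_iterIncProd_mul_pow_mul_transpose (k : ℕ)
    (h : ∀ i < k, ∀ x : (iterLineGraph G i).1, ∃ y, (iterLineGraph G i).2.Adj x y) (j : ℕ) :
    posSupport (iterIncProd G k * ((iterLineGraph G k).2.adjMatrix ℝ + 1) ^ j *
        (iterIncProd G k)ᵀ) = posSupport ((G.adjMatrix ℝ + 1) ^ (k + j)) := by
  induction k generalizing j with
  | zero =>
    have hbase :
        posSupport ((1 : Matrix V V ℝ) * (G.adjMatrix ℝ + 1) ^ j * (1 : Matrix V V ℝ)ᵀ) =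
          posSupport ((G.adjMatrix ℝ + 1) ^ (0 + j)) := by
      rw [transpose_one, Matrix.one_mul, Matrix.mul_one, Nat.zero_add]
    exact hbase
  | succ k ih =>
    rw [posSupport_iterIncProd_succ_mul_pow_mul_transpose G k j (h k k.lt_succ_self),
      ih (fun i hi => h i (Nat.lt_succ_of_lt hi)), Nat.add_right_comm, Nat.add_assoc]

end IteratedLineGraph

theorem adj_add_one_pow_pos_iff_iterIncProd_pos_general
    {V : Type u} [Fintype V] [DecidableEq V] (G : SimpleGraph V) [DecidableRel G.Adj]
    (m : ℕ)
    (hiso : ∀ k, k ≤ m - 1 → ∀ x : (iterLineGraph G k).1, ∃ y, (iterLineGraph G k).2.Adj x y)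
    (u v : V) :
    0 < (((G.adjMatrix ℝ + 1) ^ m : Matrix V V ℝ)) u v ↔
      0 < (iterIncProd G m * (iterIncProd G m)ᵀ) u v := by
  have h := congr_fun₂
    (posSupport_iterIncProd_mul_pow_mul_transpose G m (fun k hk => hiso k (by omega)) 0) u v
  rw [pow_zero, Matrix.mul_one, Nat.add_zero] at h
  -- `h` was elaborated with the classical decidability instances
  obtain rfl : ‹DecidableEq V› = fun a b => Classical.propDecidable (a = b) :=
    Subsingleton.elim _ _
  obtain rfl : ‹DecidableRel G.Adj› = fun a b => Classical.propDecidable (G.Adj a b) :=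
    Subsingleton.elim _ _
  exact (Iff.of_eq h).symm

/-- The paper's Lemma 1: if none of `L⁰(G), …, L^{m-1}(G)` has isolated vertices, then for all
vertices `u v` of `G`, `((A + I)^m) u v > 0 ↔ (H^(m) ⬝ (H^(m))ᵀ) u v > 0`. -/
theorem adj_add_one_pow_pos_iff_iterIncProd_pos
    {V : Type u} [Fintype V] [DecidableEq V] (G : SimpleGraph V) [DecidableRel G.Adj]
    (m : ℕ) (hm : 1 ≤ m)
    (hiso : ∀ k, k ≤ m - 1 → ∀ x : (iterLineGraph G k).1, ∃ y, (iterLineGraph G k).2.Adj x y)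
    (u v : V) :
    0 < (((G.adjMatrix ℝ + 1) ^ m : Matrix V V ℝ)) u v ↔
      0 < (iterIncProd G m * (iterIncProd G m)ᵀ) u v :=
  adj_add_one_pow_pos_iff_iterIncProd_pos_general G m hiso u v
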